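/- arXiv:2212.03532 — 6 statements merged into one kernel-verified Lean document; each statement's English description precedes it below -/
import Mathlib

section
/- Let P be a Poisson algebra with a derivation d (a linear map that is a derivation for both the commutative product and the Poisson bracket). Define on the underlying vector space of P two operations: a ∘ b = a · d(b) and [a, b] = {a, b}. Then (P, ∘, [·,·]) is a Gel'fand–Dorfman algebra, i.e. ∘ is a Novikov product, [·,·] is a Lie bracket, and the compatibility identity [a, b∘c] − [c, b∘a] − b∘[a,c] + [b,a]∘c − [b,c]∘a = 0 holds for all a, b, c. -/
/-- A Poisson algebra `P` with a derivation `d` (for both products)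
becomes a Gel'fand–Dorfman algebra under `a ∘ b = a * d b` and the Poisson bracket. -/
theorem stmt_0 {k : Type*} [Field k] [CharZero k]
    (P : Type*) [CommRing P] [Algebra k P]
    (br : P → P → P)
    (br_add_left : ∀ a b c : P, br (a + b) c = br a c + br b c)
    (br_add_right : ∀ a b c : P, br a (b + c) = br a b + br a c)
    (br_smul_left : ∀ (r : k) (a b : P), br (r • a) b = r • br a b)
    (br_smul_right : ∀ (r : k) (a b : P), br a (r • b) = r • br a b)
    (br_skew : ∀ a b : P, br a b = - br b a)
    (br_jacobi : ∀ a b c : P, br a (br b c) = br (br a b) c + br b (br a c))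
    (br_leibniz : ∀ a b c : P, br a (b * c) = b * br a c + br a b * c)
    (d : P → P)
    (d_add : ∀ a b : P, d (a + b) = d a + d b)
    (d_smul : ∀ (r : k) (a : P), d (r • a) = r • d a)
    (d_mul : ∀ a b : P, d (a * b) = d a * b + a * d b)
    (d_br : ∀ a b : P, d (br a b) = br (d a) b + br a (d b)) :
    ∀ a b c : P,
      -- left-symmetry of ∘ : (a∘b)∘c − a∘(b∘c) = (b∘a)∘c − b∘(a∘c)
      ((a * d b) * d c - a * d ((b * d c)) = (b * d a) * d c - b * d ((a * d c))) ∧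
      -- right-commutativity of ∘ : (a∘b)∘c = (a∘c)∘b
      ((a * d b) * d c = (a * d c) * d b) ∧
      -- GD compatibility : [a, b∘c] − [c, b∘a] − b∘[a,c] + [b,a]∘c − [b,c]∘a = 0
      (br a (b * d c) - br c (b * d a) - b * d (br a c)
        + (br b a) * d c - (br b c) * d a = 0) := by
  intro a b c
  refine ⟨?_, ?_, ?_⟩
  · rw [d_mul, d_mul]; ring
  · ring
  · rw [br_leibniz, br_leibniz, d_br, br_skew a b, br_skew c b, br_skew (d a) c]
    ring
end

section
/- Let V be a Gel'fand–Dorfman algebra with Novikov product ∘ and Lie bracket [·,·]. Then the free k[∂]-module L(V) = k[∂] ⊗ V with λ-bracket on generators [a_λ b] = [a,b] + ∂(b∘a) + λ(a∘b + b∘a), extended by sesquilinearity, satisfies the skew-symmetry axiom [a_λ b] = −[b_{−∂−λ} a] of Lie conformal algebras. -/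
open MvPolynomial TensorProduct

/-- for a Gel'fand–Dorfman algebra `V`, the quadratic conformal
algebra `L(V) = k[∂]⊗V` with `[a_λ b] = [a,b] + ∂(b∘a) + λ(a∘b+b∘a)` on
generators, extended by sesquilinearity to
`[f(∂)a _λ g(∂)b] = f(−λ)g(∂+λ)·([a,b] + ∂(b∘a) + λ(a∘b+b∘a))`,
satisfies the skew-symmetry axiom `[x_λ y] = −[y_{−∂−λ} x]`.
We work in `R = k[∂,λ]` (`X 0 = ∂`, `X 1 = λ`); substituting `−∂−λ` for the
bracket parameter is the commutative substitution. -/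
theorem stmt_8 {k : Type*} [Field k] [CharZero k]
    (V : Type*) [AddCommGroup V] [Module k V]
    (circ : V → V → V) (br : V → V → V)
    (circ_add_left : ∀ a b c : V, circ (a + b) c = circ a c + circ b c)
    (circ_add_right : ∀ a b c : V, circ a (b + c) = circ a b + circ a c)
    (circ_smul_left : ∀ (r : k) (a b : V), circ (r • a) b = r • circ a b)
    (circ_smul_right : ∀ (r : k) (a b : V), circ a (r • b) = r • circ a b)
    (left_sym : ∀ a b c : V,
      circ (circ a b) c - circ a (circ b c) = circ (circ b a) c - circ b (circ a c))
    (right_comm : ∀ a b c : V, circ (circ a b) c = circ (circ a c) b)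
    (br_add_left : ∀ a b c : V, br (a + b) c = br a c + br b c)
    (br_add_right : ∀ a b c : V, br a (b + c) = br a b + br a c)
    (br_skew : ∀ a b : V, br a b = - br b a)
    (br_jacobi : ∀ a b c : V, br a (br b c) = br (br a b) c + br b (br a c))
    (gd : ∀ a b c : V,
      br a (circ b c) - br c (circ b a) - circ b (br a c)
        + circ (br b a) c - circ (br b c) a = 0)
    -- the λ-bracket of `f(∂)⊗a` and `g(∂)⊗b`, with bracket parameter `ν`
    (Q : MvPolynomial (Fin 2) k → Polynomial k → Polynomial k → V → V
          → (MvPolynomial (Fin 2) k ⊗[k] V))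
    (hQ : ∀ ν f g a b, Q ν f g a b
      = ((Polynomial.aeval (-ν) f) * (Polynomial.aeval (X 0 + ν) g)) ⊗ₜ[k] br a b
        + ((Polynomial.aeval (-ν) f) * (Polynomial.aeval (X 0 + ν) g) * X 0)
            ⊗ₜ[k] circ b a
        + ((Polynomial.aeval (-ν) f) * (Polynomial.aeval (X 0 + ν) g) * ν)
            ⊗ₜ[k] (circ a b + circ b a)) :
    -- skew-symmetry: [f⊗a _λ g⊗b] = −[g⊗b _{−∂−λ} f⊗a]
    ∀ (f g : Polynomial k) (a b : V),
      Q (X 1) f g a b = - Q (-X 0 - X 1) g f b a := by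
  intro f g a b
  rw [hQ, hQ, br_skew a b]
  have h1 : -(-X 0 - X 1 : MvPolynomial (Fin 2) k) = X 0 + X 1 := by ring
  have h2 : (X 0 : MvPolynomial (Fin 2) k) + (-X 0 - X 1) = -X 1 := by ring
  rw [h1, h2]
  set A := Polynomial.aeval (-X 1 : MvPolynomial (Fin 2) k) f with hA
  set B := Polynomial.aeval ((X 0 : MvPolynomial (Fin 2) k) + X 1) g with hB
  have hc : B * A = A * B := mul_comm _ _
  rw [hc]
  have h3 : A * B * (-X 0 - X 1) = -(A*B*X 0) - A*B*X 1 := by ring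
  rw [h3]
  simp only [tmul_add, tmul_neg, neg_tmul, sub_tmul, add_tmul]
  abel
end

section
/- Let P be the quotient of the free differential Poisson algebra on one generator v by the differential Poisson ideal generated by v·v'. Then {v, v^{(k+1)}} · v = 0 in P for all k ≥ 0, where v^{(i)} = d^i(v). -/
/-!
Since `v * v' = 0`, the Leibniz rule of the bracket gives `{a, v} * v' + {a, v'} * v = {a, v * v'} = 0`
for every `a`; hence differentiating `{a, v} * v` only differentiates `a`, and
`{v^{(m)}, v} * v = d^m ({v, v} * v) = 0`.
-/

section DifferentialBracket

variable {P : Type*} [CommSemiring P] {br : P → P → P} {d : P → P}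

theorem bracket_zero_right_of_leibniz
    (br_leibniz : ∀ a b c : P, br a (b * c) = b * br a c + br a b * c) (a : P) :
    br a 0 = 0 := by
  simpa using br_leibniz a 0 0

theorem map_zero_of_leibniz (d_mul : ∀ a b : P, d (a * b) = d a * b + a * d b) : d 0 = 0 := by
  simpa using d_mul 0 0

theorem map_bracket_mul_self_of_mul_map_eq_zero
    (br_leibniz : ∀ a b c : P, br a (b * c) = b * br a c + br a b * c)
    (d_mul : ∀ a b : P, d (a * b) = d a * b + a * d b)
    (d_br : ∀ a b : P, d (br a b) = br (d a) b + br a (d b))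
    {u : P} (hu : u * d u = 0) (a : P) :
    d (br a u * u) = br (d a) u * u := by
  have hbr : br a (d u) * u + br a u * d u = 0 := by
    rw [mul_comm, ← br_leibniz, hu, bracket_zero_right_of_leibniz br_leibniz]
  rw [d_mul, d_br, add_mul, add_assoc, hbr, add_zero]

theorem bracket_iterate_mul_self_of_mul_map_eq_zero
    (br_leibniz : ∀ a b c : P, br a (b * c) = b * br a c + br a b * c)
    (d_mul : ∀ a b : P, d (a * b) = d a * b + a * d b)
    (d_br : ∀ a b : P, d (br a b) = br (d a) b + br a (d b))
    {u : P} (hu : u * d u = 0) (m : ℕ) (a : P) :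
    br (d^[m] a) u * u = d^[m] (br a u * u) := by
  induction m generalizing a with
  | zero => rfl
  | succ m ih =>
    rw [Function.iterate_succ_apply, ih, Function.iterate_succ_apply,
      map_bracket_mul_self_of_mul_map_eq_zero br_leibniz d_mul d_br hu]

end DifferentialBracket

theorem stmt_11_general {k : Type*} [Field k] [CharZero k]
    (P : Type*) [CommRing P] [Algebra k P]
    (br : P → P → P)
    (br_skew : ∀ a b : P, br a b = - br b a)
    (br_leibniz : ∀ a b c : P, br a (b * c) = b * br a c + br a b * c)
    (d : P → P)
    (d_mul : ∀ a b : P, d (a * b) = d a * b + a * d b)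
    (d_br : ∀ a b : P, d (br a b) = br (d a) b + br a (d b))
    (v : P) (hv : v * d v = 0) :
    ∀ K : ℕ, br v (d^[K + 1] v) * v = 0 := by
  intro K
  have : IsAddTorsionFree P := .of_isTorsionFree k P
  have hvv : br v v = 0 := self_eq_neg.mp (br_skew v v)
  rw [br_skew, neg_mul, bracket_iterate_mul_self_of_mul_map_eq_zero br_leibniz d_mul d_br hv,
    hvv, zero_mul, Function.iterate_fixed (map_zero_of_leibniz d_mul), neg_zero]

/-- in a differential Poisson algebra in which `v·v' = 0`
(e.g. the quotient of the free differential Poisson algebra on `v` by the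
differential Poisson ideal generated by `v·v'`), one has
`{v, v^{(k+1)}}·v = 0` for all `k ≥ 0`. -/
theorem stmt_11 {k : Type*} [Field k] [CharZero k]
    (P : Type*) [CommRing P] [Algebra k P]
    (br : P → P → P)
    (br_add_left : ∀ a b c : P, br (a + b) c = br a c + br b c)
    (br_add_right : ∀ a b c : P, br a (b + c) = br a b + br a c)
    (br_smul_left : ∀ (r : k) (a b : P), br (r • a) b = r • br a b)
    (br_smul_right : ∀ (r : k) (a b : P), br a (r • b) = r • br a b)
    (br_skew : ∀ a b : P, br a b = - br b a)
    (br_jacobi : ∀ a b c : P, br a (br b c) = br (br a b) c + br b (br a c))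
    (br_leibniz : ∀ a b c : P, br a (b * c) = b * br a c + br a b * c)
    (d : P → P)
    (d_add : ∀ a b : P, d (a + b) = d a + d b)
    (d_smul : ∀ (r : k) (a : P), d (r • a) = r • d a)
    (d_mul : ∀ a b : P, d (a * b) = d a * b + a * d b)
    (d_br : ∀ a b : P, d (br a b) = br (d a) b + br a (d b))
    (v : P) (hv : v * d v = 0) :
    ∀ K : ℕ, br v (d^[K + 1] v) * v = 0 :=
  stmt_11_general (k := k) P br br_skew br_leibniz d d_mul d_br v hv
end

section
/- Let P be a differential Poisson algebra and let v ∈ P. If u ∈ P satisfies {v, u}·v = 0 and {v^{(p)}, {v,u}·v} = 0 for all p ≥ 0, and {u, {v, v^{(p)}}·v} = 0 for all p, then {v, {v^{(p)}, u}}·v = 0 for all p ≥ 0. -/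
/-- the inductive step. In a differential Poisson algebra `P`,
if `u ∈ P` satisfies `{v,u}·v = 0`, `{v^{(p)}, {v,u}·v} = 0` for all `p ≥ 0`,
and `{u, {v,v^{(p)}}·v} = 0` for all `p`, then `{v, {v^{(p)}, u}}·v = 0`
for all `p ≥ 0`. -/
theorem stmt_12 {k : Type*} [Field k] [CharZero k]
    (P : Type*) [CommRing P] [Algebra k P]
    (br : P → P → P)
    (br_add_left : ∀ a b c : P, br (a + b) c = br a c + br b c)
    (br_add_right : ∀ a b c : P, br a (b + c) = br a b + br a c)
    (br_smul_left : ∀ (r : k) (a b : P), br (r • a) b = r • br a b)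
    (br_smul_right : ∀ (r : k) (a b : P), br a (r • b) = r • br a b)
    (br_skew : ∀ a b : P, br a b = - br b a)
    (br_jacobi : ∀ a b c : P, br a (br b c) = br (br a b) c + br b (br a c))
    (br_leibniz : ∀ a b c : P, br a (b * c) = b * br a c + br a b * c)
    (d : P → P)
    (d_add : ∀ a b : P, d (a + b) = d a + d b)
    (d_smul : ∀ (r : k) (a : P), d (r • a) = r • d a)
    (d_mul : ∀ a b : P, d (a * b) = d a * b + a * d b)
    (d_br : ∀ a b : P, d (br a b) = br (d a) b + br a (d b))
    (v u : P)
    (h1 : br v u * v = 0)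
    (h2 : ∀ p : ℕ, br (d^[p] v) (br v u * v) = 0)
    (h3 : ∀ p : ℕ, br u (br v (d^[p] v) * v) = 0) :
    ∀ p : ℕ, br v (br (d^[p] v) u) * v = 0 := by
  intro p
  set w := d^[p] v with hw
  have hz : ∀ a : P, br (0 : P) a = 0 := by
    intro a
    have h := br_add_left 0 0 a
    simp only [add_zero] at h
    exact add_eq_left.mp h.symm
  have hnegl : ∀ a b : P, br (-a) b = - br a b := by
    intro a b
    have h := br_add_left a (-a) b
    simp only [add_neg_cancel, hz] at h
    linear_combination -h
  have e1 := h2 p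
  rw [br_leibniz, br_jacobi, br_skew w v, hnegl, br_skew (br v w) u] at e1
  have e3 := h3 p
  rw [br_leibniz, br_skew u v] at e3
  linear_combination e1 - e3
end

section
/- Let W be the Weyl algebra k⟨d,p⟩/(dp−pd−1) and A = x − T(d+1)p ∈ k[T,x]⊗W with the conformal λ-product (f⊗α)_λ(g⊗β) = f(−λ,x)g(T+λ,x+λ)⊗αβ. Then the element A satisfies the conformal commutator relation A_λ A − A_{−T−λ} A = (T + 2λ)A, i.e., A represents the Virasoro conformal algebra relation with locality N(A,A) = 3. -/
open MvPolynomial TensorProduct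

set_option maxHeartbeats 2000000 in
set_option synthInstance.maxHeartbeats 400000 in
/-- with `W` the Weyl algebra realized as operators on `k[v]`
(`p` = multiplication by `v`, `d = d/dv`, so `dp − pd = 1`) and
`A = x⊗1 − T⊗(d+1)p ∈ k[T,x]⊗W` under the conformal λ-product
`(f⊗α)_λ(g⊗β) = f(−λ,x)g(T+λ,x+λ)⊗αβ`, the conformal commutator relation
`A_λ A − A_{−T−λ} A = (T+2λ)A` holds (`A_{−T−λ} A` is the commutative
substitution `ν := −T−λ` into the λ-product), and `A_λ A` has λ-degree 2,
i.e. locality `N(A,A) = 3`. We work in `S = k[T,x,λ]`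
(`X 0 = T`, `X 1 = x`, `X 2 = λ`). -/
theorem stmt_16 {k : Type*} [Field k] [CharZero k]
    (m : MvPolynomial (Fin 3) k
          → (MvPolynomial (Fin 3) k ⊗[k] Module.End k (Polynomial k))
          → (MvPolynomial (Fin 3) k ⊗[k] Module.End k (Polynomial k))
          → (MvPolynomial (Fin 3) k ⊗[k] Module.End k (Polynomial k)))
    (hm : ∀ ν a b, m ν a b
      = (Algebra.TensorProduct.map
          (aeval (fun i : Fin 3 => if i = 0 then -ν else X i))
          (AlgHom.id k (Module.End k (Polynomial k))) a)
        * (Algebra.TensorProduct.map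
          (aeval (fun i : Fin 3 => if i = 0 then X 0 + ν
                                   else if i = 1 then X 1 + ν else X i))
          (AlgHom.id k (Module.End k (Polynomial k))) b))
    (dW pW q : Module.End k (Polynomial k))
    (hd : dW = Polynomial.derivative)
    (hp : pW = LinearMap.mulLeft k (Polynomial.X : Polynomial k))
    (hq : q = (dW + 1) * pW)
    (A : MvPolynomial (Fin 3) k ⊗[k] Module.End k (Polynomial k))
    (hA : A = (X 1 : MvPolynomial (Fin 3) k) ⊗ₜ[k] (1 : Module.End k (Polynomial k))
              - (X 0 : MvPolynomial (Fin 3) k) ⊗ₜ[k] q) :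
    -- conformal commutator: A_λ A − A_{−T−λ} A = (T + 2λ)A
    (m (X 2) A A - m (-X 0 - X 2) A A
      = (((X 0 + 2 * X 2) : MvPolynomial (Fin 3) k)
            ⊗ₜ[k] (1 : Module.End k (Polynomial k))) * A) ∧
    -- locality N(A,A) = 3 : A_λ A is a polynomial of degree 2 in λ
    (m (X 2) A A
      = (X 1 * X 1) ⊗ₜ[k] (1 : Module.End k (Polynomial k))
        - (X 1 * X 0) ⊗ₜ[k] q
        + (X 2 * X 1) ⊗ₜ[k] (1 : Module.End k (Polynomial k))
        - (X 2 * X 0) ⊗ₜ[k] (q * q)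
        + (X 2 * X 2) ⊗ₜ[k] (q * (1 - q))) := by
  subst hA
  have hL : ∀ u w z : MvPolynomial (Fin 3) k ⊗[k] Module.End k (Polynomial k),
      u * (w - z) = u * w - u * z := fun u w z => by
    simpa using map_sub (LinearMap.mulLeft k u) w z
  have hR : ∀ u w z : MvPolynomial (Fin 3) k ⊗[k] Module.End k (Polynomial k),
      (w - z) * u = w * u - z * u := fun u w z => by
    simpa using map_sub (LinearMap.mulRight k u) w z
  constructor
  · rw [hm, hm]
    simp only [map_sub, Algebra.TensorProduct.map_tmul, aeval_X, AlgHom.id_apply]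
    norm_num
    simp only [hR, hL, Algebra.TensorProduct.tmul_mul_tmul, one_mul, mul_one]
    ring_nf
    simp only [TensorProduct.add_tmul, TensorProduct.sub_tmul, TensorProduct.neg_tmul,
      TensorProduct.tmul_sub, TensorProduct.tmul_add, TensorProduct.tmul_neg]
    abel_nf
    simp only [TensorProduct.smul_tmul', nsmul_eq_mul, zsmul_eq_mul]
    ring_nf
    abel
  · rw [hm]
    simp only [map_sub, Algebra.TensorProduct.map_tmul, aeval_X, AlgHom.id_apply]
    norm_num
    simp only [hR, hL, Algebra.TensorProduct.tmul_mul_tmul, one_mul, mul_one, mul_sub]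
    ring_nf
    simp only [TensorProduct.add_tmul, TensorProduct.sub_tmul, TensorProduct.neg_tmul,
      TensorProduct.tmul_sub, TensorProduct.tmul_add, TensorProduct.tmul_neg]
    abel_nf
end

section
/- In the Weyl algebra W = k⟨d,p⟩/(dp − pd − 1) acting on k[v] (p = multiplication by v, d = d/dv, char k = 0), the elements x^q ((d+1)p)^l (1 − (d+1)p) for q, l ≥ 0 together with x^s(x − T(d+1)p) for s ≥ 0 are linearly independent over k[T] inside k[T,x]⊗W, as can be verified by applying them to 1 ∈ k[v] via the action (f(T,x)⊗α)_μ(h(T)⊗u) = f(−μ, T)h(T+μ)⊗α(u). -/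
/-!
The operator `Q = (d+1)p` raises degrees by exactly one, so it is transcendental over `k`,
and `Y ↦ 1 ⊗ Q` embeds `k[T,x][Y]` into `k[T,x] ⊗ W`. A vanishing combination therefore
becomes the polynomial identity `∑ F_s x^s (x - T Y) + ∑ G_{q,l} x^q Y^l (1 - Y) = 0`.
Setting `Y = 1` leaves `(x - T) ∑ F_s x^s = 0`, so `F = 0`; cancelling `1 - Y` then gives
`G = 0`.
-/

open MvPolynomial TensorProduct

namespace Polynomial

section Degree

variable {R : Type*} [CommRing R] [IsDomain R]

theorem degree_derivative_X_mul_add_X_mul (p : R[X]) :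
    (derivative (X * p) + X * p).degree = p.degree + 1 := by
  rcases eq_or_ne p 0 with rfl | hp
  · simp
  rw [degree_add_eq_right_of_degree_lt (degree_derivative_lt (mul_ne_zero X_ne_zero hp)),
    X_mul, degree_mul_X]

theorem degree_pow_apply_one {Q : Module.End R R[X]} (hQ : ∀ p, (Q p).degree = p.degree + 1)
    (j : ℕ) : ((Q ^ j) 1).degree = j := by
  induction j with
  | zero => simp
  | succ j ih => rw [pow_succ', Module.End.mul_apply, hQ, ih]; norm_cast

theorem transcendental_of_degree_apply {Q : Module.End R R[X]}
    (hQ : ∀ p, (Q p).degree = p.degree + 1) : Transcendental R Q := by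
  have hli := (⟨fun j => (Q ^ j) 1, degree_pow_apply_one hQ⟩ : Sequence R).linearIndependent
  rw [transcendental_iff_injective, injective_iff_map_eq_zero]
  exact fun p hp => (linearIndependent_powers_iff_aeval Q 1).mp hli p (by simp [hp])

end Degree

section Tensor

variable {k A E : Type*} [CommRing k] [CommRing A] [Algebra k A] [Module.Flat k A] [Ring E]
  [Algebra k E]

theorem aeval_one_tmul_injective {Q : E} (hQ : Transcendental k Q) :
    Function.Injective (aeval (R := A) ((1 : A) ⊗ₜ[k] Q)) := by
  have hfac : aeval (R := A) ((1 : A) ⊗ₜ[k] Q) = (Algebra.TensorProduct.map (AlgHom.id A A)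
      (aeval Q)).comp (polyEquivTensor' k A).toAlgHom := algHom_ext (by simp)
  rw [hfac]
  exact (Module.Flat.lTensor_preserves_injective_linearMap (M := A) (aeval Q).toLinearMap
    (transcendental_iff_injective.mp hQ)).comp (polyEquivTensor' k A).injective

end Tensor

section Coefficients

variable {R : Type*} [CommRing R]

theorem coeff_finsuppSum_C_mul_X_pow (F : ℕ →₀ R) (n : ℕ) :
    (F.sum fun m a => C a * X ^ m).coeff n = F n := by
  simp [Finsupp.sum]

theorem coeff_coeff_finsuppSum_C_mul_X_pow (G : ℕ × ℕ →₀ R) (q l : ℕ) :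
    ((G.sum fun ql a => C (C a * X ^ ql.1) * X ^ ql.2).coeff l).coeff q = G (q, l) := by
  have hql (x : ℕ × ℕ) : (l = x.2 ∧ q = x.1) ↔ (q, l) = x := by rw [Prod.ext_iff, and_comm]
  simp only [Finsupp.sum, finsetSum_coeff, coeff_C_mul_X_pow, apply_ite (coeff · q), coeff_zero,
    ← ite_and, hql, Finset.sum_ite_eq]
  exact ite_eq_left_iff.mpr fun h => (Finsupp.notMem_support_iff.mp h).symm

variable [IsDomain R]

theorem eq_zero_of_sum_mul_X_sub_C_mul_X_add_sum_mul_one_sub_X (t : R) (F : ℕ →₀ R)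
    (G : ℕ × ℕ →₀ R)
    (h : F.sum (fun s a => C (C a * X ^ s) * (C X - C (C t) * X))
      + G.sum (fun ql a => C (C a * X ^ ql.1) * X ^ ql.2 * (1 - X)) = 0) :
    F = 0 ∧ G = 0 := by
  have hF : F = 0 := by
    have hF : (F.sum fun s a => C a * X ^ s) * (X - C t) = 0 := by
      have heval := congrArg (evalRingHom 1) h
      rw [map_add, map_finsuppSum, map_finsuppSum] at heval
      simpa [Finsupp.sum_mul, mul_assoc] using heval
    ext n
    rw [← coeff_finsuppSum_C_mul_X_pow F n,
      (mul_eq_zero.mp hF).resolve_right (X_sub_C_ne_zero t), coeff_zero, Finsupp.coe_zero,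
      Pi.zero_apply]
  subst hF
  refine ⟨rfl, ?_⟩
  have hG : (G.sum fun ql a => C (C a * X ^ ql.1) * X ^ ql.2) * (1 - X) = 0 := by
    simpa [Finsupp.sum_mul] using h
  have hX : (1 - X : R[X][X]) ≠ 0 := sub_ne_zero.mpr (by simpa using (X_ne_C (1 : R[X])).symm)
  ext ⟨q, l⟩
  rw [← coeff_coeff_finsuppSum_C_mul_X_pow G q l, (mul_eq_zero.mp hG).resolve_right hX]
  rfl

end Coefficients

end Polynomial

theorem stmt_17_general {k : Type*} [Field k]
    (dW pW Q : Module.End k (Polynomial k))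
    (hd : dW = Polynomial.derivative)
    (hp : pW = LinearMap.mulLeft k (Polynomial.X : Polynomial k))
    (hQ : Q = (dW + 1) * pW)
    (toS : Polynomial k →ₐ[k] MvPolynomial (Fin 2) k)
    (htoS : toS = Polynomial.aeval (X 0))
    -- the two families of elements of k[T,x] ⊗ W
    (u : ℕ → MvPolynomial (Fin 2) k ⊗[k] Module.End k (Polynomial k))
    (hu : ∀ s, u s
      = (X 1 ^ (s + 1) : MvPolynomial (Fin 2) k)
          ⊗ₜ[k] (1 : Module.End k (Polynomial k))
        - (X 1 ^ s * X 0 : MvPolynomial (Fin 2) k) ⊗ₜ[k] Q)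
    (w : ℕ × ℕ → MvPolynomial (Fin 2) k ⊗[k] Module.End k (Polynomial k))
    (hw : ∀ ql : ℕ × ℕ, w ql
      = (X 1 ^ ql.1 : MvPolynomial (Fin 2) k) ⊗ₜ[k] (Q ^ ql.2 * (1 - Q))) :
    -- k[T]-linear independence of the combined family
    ∀ (F : ℕ →₀ Polynomial k) (G : ℕ × ℕ →₀ Polynomial k),
      F.sum (fun s h =>
          ((toS h) ⊗ₜ[k] (1 : Module.End k (Polynomial k))) * u s)
        + G.sum (fun ql h =>
          ((toS h) ⊗ₜ[k] (1 : Module.End k (Polynomial k))) * w ql) = 0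
      → F = 0 ∧ G = 0 := by
  intro F G hFG
  have hQdeg : ∀ f, (Q f).degree = f.degree + 1 := fun f => by
    subst hQ hd hp
    exact Polynomial.degree_derivative_X_mul_add_X_mul f
  set P : Polynomial (MvPolynomial (Fin 2) k) :=
    F.sum (fun s h => Polynomial.C (toS h * X 1 ^ s)
        * (Polynomial.C (X 1) - Polynomial.C (X 0) * Polynomial.X))
      + G.sum (fun ql h => Polynomial.C (toS h * X 1 ^ ql.1)
        * Polynomial.X ^ ql.2 * (1 - Polynomial.X))
  have hP : P = 0 := by
    refine Polynomial.aeval_one_tmul_injective (Polynomial.transcendental_of_degree_apply hQdeg) ?_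
    rw [map_zero, ← hFG, map_add, map_finsuppSum, map_finsuppSum]
    congr 1 <;> refine Finsupp.sum_congr fun _ _ => ?_ <;>
      simp [hu, hw, Algebra.TensorProduct.tmul_mul_tmul, mul_sub, pow_succ, mul_assoc, tmul_sub]
  let ρ : MvPolynomial (Fin 2) k →ₐ[k] Polynomial (Polynomial k) :=
    aeval ![Polynomial.C Polynomial.X, Polynomial.X]
  have hρ : ∀ h, ρ (toS h) = Polynomial.C h := by
    have : ρ.comp toS = Polynomial.CAlgHom := by subst htoS; ext; simp [ρ]
    exact fun h => AlgHom.congr_fun this h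
  refine Polynomial.eq_zero_of_sum_mul_X_sub_C_mul_X_add_sum_mul_one_sub_X Polynomial.X F G ?_
  have := congrArg (Polynomial.mapAlgHom ρ) hP
  rw [map_zero, map_add, map_finsuppSum, map_finsuppSum] at this
  simpa [hρ, ρ] using this

/-- in `k[T,x] ⊗ W`, where `W` is the Weyl algebra realized as
operators on `k[v]` (`p` = multiplication by `v`, `d = d/dv`, char `k` = 0),
the elements `x^q ((d+1)p)^l (1 − (d+1)p)` (`q, l ≥ 0`) together with
`x^s (x − T(d+1)p)` (`s ≥ 0`) are linearly independent over `k[T]`.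
We work in `S = k[T,x]` (`X 0 = T`, `X 1 = x`). -/
theorem stmt_17 {k : Type*} [Field k] [CharZero k]
    (dW pW Q : Module.End k (Polynomial k))
    (hd : dW = Polynomial.derivative)
    (hp : pW = LinearMap.mulLeft k (Polynomial.X : Polynomial k))
    (hQ : Q = (dW + 1) * pW)
    (toS : Polynomial k →ₐ[k] MvPolynomial (Fin 2) k)
    (htoS : toS = Polynomial.aeval (X 0))
    -- the two families of elements of k[T,x] ⊗ W
    (u : ℕ → MvPolynomial (Fin 2) k ⊗[k] Module.End k (Polynomial k))
    (hu : ∀ s, u s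
      = (X 1 ^ (s + 1) : MvPolynomial (Fin 2) k)
          ⊗ₜ[k] (1 : Module.End k (Polynomial k))
        - (X 1 ^ s * X 0 : MvPolynomial (Fin 2) k) ⊗ₜ[k] Q)
    (w : ℕ × ℕ → MvPolynomial (Fin 2) k ⊗[k] Module.End k (Polynomial k))
    (hw : ∀ ql : ℕ × ℕ, w ql
      = (X 1 ^ ql.1 : MvPolynomial (Fin 2) k) ⊗ₜ[k] (Q ^ ql.2 * (1 - Q))) :
    -- k[T]-linear independence of the combined family
    ∀ (F : ℕ →₀ Polynomial k) (G : ℕ × ℕ →₀ Polynomial k),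
      F.sum (fun s h =>
          ((toS h) ⊗ₜ[k] (1 : Module.End k (Polynomial k))) * u s)
        + G.sum (fun ql h =>
          ((toS h) ⊗ₜ[k] (1 : Module.End k (Polynomial k))) * w ql) = 0
      → F = 0 ∧ G = 0 :=
  stmt_17_general dW pW Q hd hp hQ toS htoS u hu w hw
end
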